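/- arXiv:1706.10110 — 4 statements merged into one kernel-verified Lean document; each statement's English description precedes it below -/
import Mathlib

section
/- Let m, s, k be positive integers with s = 4k and k even, and let 𝕊 be the set of tuples S ∈ ([m] × [s] × [s])^{k/2} such that (1) every triple (i, j, h) ∈ S has j ≠ h, (2) every column a ∈ [s] satisfies |{(i,j,h) ∈ S : j = a or h = a}| ≤ 1, and (3) every diagonal a ∈ {−(m−1), …, s−1} satisfies |{(i,j,h) ∈ S : j−i = a or h−i = a}| ≤ 1. Then |𝕊| ≥ m^{k/2} · s^k · 4^{−k/2}. -/
/-!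
Build the tuple one triple at a time. A prefix of `n` admissible triples touches at most `2n`
columns and `2n` diagonals, so in every row `i` at least `s - 4n` columns `c` are untouched and
lie on an untouched diagonal `c - i`; any ordered pair of distinct such columns, placed in row
`i`, extends the prefix. Hence there are at least `∏_{n < k/2} m (s - 4n)(s - 4n - 1)` admissible
tuples, and each factor is at least `m (s/2)^2`.
-/

open Finset

theorem prod_range_le_card_of_le_card_cons {α : Type*} [Finite α]
    (P : ∀ n, (Fin n → α) → Prop) (h0 : ∃ S, P 0 S)
    (htail : ∀ n (S : Fin (n + 1) → α), P (n + 1) S → P n (Fin.tail S)) (b : ℕ → ℕ)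
    (hb : ∀ n (T : Fin n → α), P n T → b n ≤ Nat.card {x // P (n + 1) (Fin.cons x T)})
    (n : ℕ) : ∏ l ∈ range n, b l ≤ Nat.card {S // P n S} := by
  induction n with
  | zero =>
    obtain ⟨S, hS⟩ := h0
    have : Nonempty {S // P 0 S} := ⟨⟨S, hS⟩⟩
    exact Nat.card_pos
  | succ n ih =>
    let split : {S // P (n + 1) S} ≃ Σ T : {T // P n T}, {x // P (n + 1) (Fin.cons x T.1)} :=
      { toFun S := ⟨⟨Fin.tail S.1, htail n S.1 S.2⟩, ⟨S.1 0, by simpa using S.2⟩⟩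
        invFun p := ⟨Fin.cons p.2.1 p.1.1, p.2.2⟩
        left_inv S := Subtype.ext (Fin.cons_self_tail S.1)
        right_inv p := rfl }
    have := Fintype.ofFinite {T // P n T}
    calc ∏ l ∈ range (n + 1), b l = (∏ l ∈ range n, b l) * b n := prod_range_succ b n
      _ ≤ Nat.card {T // P n T} * b n := Nat.mul_le_mul_right _ ih
      _ ≤ ∑ T : {T // P n T}, Nat.card {x // P (n + 1) (Fin.cons x T.1)} := by
        rw [Nat.card_eq_fintype_card, ← card_univ, ← smul_eq_mul]
        exact card_nsmul_le_sum _ _ _ fun T _ => hb n T.1 T.2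
      _ = Nat.card {S // P (n + 1) S} := by rw [Nat.card_congr split, Nat.card_sigma]

section LabelsPairwiseDisjoint

variable {β : Type*} [DecidableEq β] {n : ℕ}

def LabelsPairwiseDisjoint (f g : Fin n → β) : Prop :=
  ∀ a, #{l | f l = a ∨ g l = a} ≤ 1

def labelSet (f g : Fin n → β) : Finset β :=
  univ.image f ∪ univ.image g

theorem card_labelSet_le (f g : Fin n → β) : #(labelSet f g) ≤ 2 * n := by
  calc #(labelSet f g) ≤ #(univ.image f) + #(univ.image g) := card_union_le _ _
    _ ≤ n + n := by
      gcongr <;> exact card_image_le.trans (by rw [card_univ, Fintype.card_fin])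
    _ = 2 * n := by ring

theorem LabelsPairwiseDisjoint.tail {f g : Fin (n + 1) → β} (h : LabelsPairwiseDisjoint f g) :
    LabelsPairwiseDisjoint (Fin.tail f) (Fin.tail g) := fun a => by
  have := h a
  rw [Fin.card_filter_univ_succ'] at this
  exact le_of_add_le_right this

theorem LabelsPairwiseDisjoint.of_tail {f g : Fin (n + 1) → β}
    (h : LabelsPairwiseDisjoint (Fin.tail f) (Fin.tail g))
    (hf : f 0 ∉ labelSet (Fin.tail f) (Fin.tail g))
    (hg : g 0 ∉ labelSet (Fin.tail f) (Fin.tail g)) : LabelsPairwiseDisjoint f g := fun a => by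
  rw [Fin.card_filter_univ_succ']
  split_ifs with h0
  · suffices #{l : Fin n | f l.succ = a ∨ g l.succ = a} = 0 by omega
    rw [card_eq_zero, filter_eq_empty_iff]
    rintro l - (hl | hl) <;>
      rcases h0 with rfl | rfl <;> simp_all [labelSet, Fin.tail]
  · exact (zero_add _).trans_le (h a)

end LabelsPairwiseDisjoint

namespace HalfTuple

variable {m s n : ℕ}

def Admissible (T : Fin n → Fin m × Fin s × Fin s) : Prop :=
  (∀ l, (T l).2.1 ≠ (T l).2.2) ∧
  LabelsPairwiseDisjoint (fun l => (T l).2.1) (fun l => (T l).2.2) ∧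
  LabelsPairwiseDisjoint (fun l => ((T l).2.1 : ℤ) - (T l).1) (fun l => ((T l).2.2 : ℤ) - (T l).1)

def usedColumns (T : Fin n → Fin m × Fin s × Fin s) : Finset (Fin s) :=
  labelSet (fun l => (T l).2.1) (fun l => (T l).2.2)

def usedDiagonals (T : Fin n → Fin m × Fin s × Fin s) : Finset ℤ :=
  labelSet (fun l => ((T l).2.1 : ℤ) - (T l).1) (fun l => ((T l).2.2 : ℤ) - (T l).1)

def freeColumns (T : Fin n → Fin m × Fin s × Fin s) (i : Fin m) : Finset (Fin s) :=
  (usedColumns T ∪ ({c : Fin s | (c : ℤ) - i ∈ usedDiagonals T} : Finset (Fin s)))ᶜ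

theorem Admissible.tail {T : Fin (n + 1) → Fin m × Fin s × Fin s} (hT : Admissible T) :
    Admissible (Fin.tail T) :=
  ⟨fun l => hT.1 l.succ, hT.2.1.tail, hT.2.2.tail⟩

theorem admissible_cons {T : Fin n → Fin m × Fin s × Fin s} (hT : Admissible T) {i : Fin m}
    {j h : Fin s} (hj : j ∈ freeColumns T i) (hh : h ∈ freeColumns T i) (hjh : j ≠ h) :
    Admissible (Fin.cons (i, j, h) T) := by
  simp only [freeColumns, mem_compl, mem_union, mem_filter, mem_univ, true_and, not_or] at hj hh
  exact ⟨Fin.cases hjh hT.1, hT.2.1.of_tail hj.1 hh.1, hT.2.2.of_tail hj.2 hh.2⟩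

theorem le_card_freeColumns (T : Fin n → Fin m × Fin s × Fin s) (i : Fin m) :
    s - 4 * n ≤ #(freeColumns T i) := by
  have hdiag : #{c : Fin s | (c : ℤ) - i ∈ usedDiagonals T} ≤ #(usedDiagonals T) :=
    card_le_card_of_injOn (fun c => (c : ℤ) - i) (fun c hc => by simpa using hc)
      fun c _ c' _ hcc' => Fin.ext (by simpa using hcc')
  have hcols := card_labelSet_le (fun l => (T l).2.1) (fun l => (T l).2.2)
  have hdiags := card_labelSet_le (fun l => ((T l).2.1 : ℤ) - (T l).1)
    (fun l => ((T l).2.2 : ℤ) - (T l).1)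
  have := card_union_le (usedColumns T) {c : Fin s | (c : ℤ) - i ∈ usedDiagonals T}
  rw [freeColumns, card_compl, Fintype.card_fin]
  unfold usedColumns usedDiagonals at *
  omega

theorem le_card_admissible_cons {T : Fin n → Fin m × Fin s × Fin s} (hT : Admissible T) :
    m * ((s - 4 * n) * (s - 4 * n - 1)) ≤ Nat.card {x // Admissible (Fin.cons x T)} := by
  classical
  calc m * ((s - 4 * n) * (s - 4 * n - 1))
      = ∑ _i : Fin m, (s - 4 * n) * (s - 4 * n - 1) := by simp
    _ ≤ ∑ i, #(freeColumns T i).offDiag := by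
        refine sum_le_sum fun i _ => ?_
        have hi := le_card_freeColumns T i
        rw [offDiag_card, ← Nat.mul_sub_one]
        exact Nat.mul_le_mul hi (Nat.sub_le_sub_right hi 1)
    _ = #(univ.sigma fun i => (freeColumns T i).offDiag) := (card_sigma _ _).symm
    _ ≤ #{x | Admissible (Fin.cons x T)} := by
      refine card_le_card_of_injOn (fun p => (p.1, p.2)) (fun p hp => ?_) fun p _ q _ hpq => ?_
      · simp only [coe_sigma, Set.mem_sigma_iff, mem_coe, mem_univ, mem_offDiag,
          true_and] at hp
        simpa using admissible_cons hT hp.1 hp.2.1 hp.2.2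
      · simp only [Prod.mk.injEq] at hpq
        exact Sigma.ext hpq.1 (heq_of_eq hpq.2)
    _ = Nat.card {x // Admissible (Fin.cons x T)} := by
      rw [Nat.card_eq_fintype_card, Fintype.card_subtype]

theorem le_card_admissible (n : ℕ) :
    ∏ l ∈ range n, m * ((s - 4 * l) * (s - 4 * l - 1)) ≤
      Nat.card {T : Fin n → Fin m × Fin s × Fin s // Admissible T} :=
  prod_range_le_card_of_le_card_cons (fun _ => Admissible)
    ⟨Fin.elim0, fun l => l.elim0, fun _ => by simp, fun _ => by simp⟩
    (fun _ _ hS => hS.tail) _ (fun _ _ hT => le_card_admissible_cons hT) n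

end HalfTuple

theorem half_tuple_count_lower_general (m s k : ℕ) (hkeven : Even k)
    (hs : s = 4 * k) :
    (m : ℝ) ^ (k / 2) * (s : ℝ) ^ k / (4 : ℝ) ^ (k / 2) ≤
      Nat.card {S : Fin (k / 2) → Fin m × Fin s × Fin s //
        (∀ l, (S l).2.1 ≠ (S l).2.2) ∧
        (∀ a : Fin s,
          (Finset.univ.filter fun l => (S l).2.1 = a ∨ (S l).2.2 = a).card ≤ 1) ∧
        (∀ a : ℤ,
          (Finset.univ.filter fun l =>
            ((S l).2.1 : ℤ) - ((S l).1 : ℤ) = a ∨ ((S l).2.2 : ℤ) - ((S l).1 : ℤ) = a).card ≤ 1)} := by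
  obtain ⟨t, rfl⟩ := hkeven
  have ht : (t + t) / 2 = t := by omega
  have hfactor : ∀ l ∈ range t, m * (4 * t) ^ 2 ≤ m * ((s - 4 * l) * (s - 4 * l - 1)) := by
    intro l hl
    rw [mem_range] at hl
    rw [sq]
    gcongr <;> omega
  calc (m : ℝ) ^ ((t + t) / 2) * (s : ℝ) ^ (t + t) / (4 : ℝ) ^ ((t + t) / 2)
      = ((m : ℝ) * ((s : ℝ) ^ 2 / 4)) ^ t := by
        rw [ht, ← two_mul, mul_pow, div_pow, ← pow_mul]
        ring
    _ = ((m * (4 * t) ^ 2) ^ t : ℕ) := by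
        rw [hs]
        push_cast
        ring
    _ ≤ ∏ l ∈ range t, m * ((s - 4 * l) * (s - 4 * l - 1)) := by
        exact_mod_cast card_range t ▸ pow_card_le_prod _ _ _ hfactor
    _ ≤ _ := by
        rw [ht]
        -- the predicate in the statement is `HalfTuple.Admissible` unfolded
        exact Nat.cast_le.mpr (HalfTuple.le_card_admissible t)

/-- Lower bound on the number of "half tuples": with `s = 4k`, `k` even, the number of tuples
of `k/2` triples in `[m] × [s] × [s]` with distinct entries in each triple, touching each
column at most once and each diagonal at most once, is at least `m^{k/2} s^k 4^{-k/2}`. -/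
theorem half_tuple_count_lower (m s k : ℕ) (hm : 0 < m) (hk : 0 < k) (hkeven : Even k)
    (hs : s = 4 * k) :
    (m : ℝ) ^ (k / 2) * (s : ℝ) ^ k / (4 : ℝ) ^ (k / 2) ≤
      Nat.card {S : Fin (k / 2) → Fin m × Fin s × Fin s //
        (∀ l, (S l).2.1 ≠ (S l).2.2) ∧
        (∀ a : Fin s,
          (Finset.univ.filter fun l => (S l).2.1 = a ∨ (S l).2.2 = a).card ≤ 1) ∧
        (∀ a : ℤ,
          (Finset.univ.filter fun l =>
            ((S l).2.1 : ℤ) - ((S l).1 : ℤ) = a ∨ ((S l).2.2 : ℤ) - ((S l).1 : ℤ) = a).card ≤ 1)} :=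
  half_tuple_count_lower_general m s k hkeven hs
end

section
/- With notation as above (T Toeplitz with Rademacher entries, D Rademacher diagonal, x supported on the first s coordinates with entries ±1/√s, Z_k := (‖(1/√m) T D x‖₂² − 1)^k), for any even positive integer k, E[Z_k] = Γ_k / (s^k m^k), where Γ_k is the number of tuples S ∈ ([m] × [s] × [s])^k with j ≠ h in each triple, each column touched an even number of times, and each diagonal touched an even number of times. -/
/-!
Almost surely `t` and `d` take values `±1`, so in `(∑ⱼ t_{j-i} d_j x_j)²` the diagonal terms add up
to `∑ⱼ x_j² = 1`: thus `‖(1/√m) T D x‖² - 1` is `1/m` times the sum of the cross terms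
`t_{j-i} t_{h-i} d_j d_h x_j x_h` over the triples `(i, j, h)` with `j ≠ h`, and its `k`-th power is
`m⁻ᵏ` times a sum over `k`-tuples of such triples. By independence, the expectation of a product
of Rademacher variables is `1` if every variable occurs an even number of times and `0` otherwise;
for a tuple of triples this says that every column (the `d`'s) and every diagonal (the `t`'s) is
touched an even number of times. In that case the `2k` coordinates of `x` that occur multiply to
`∏ |x_j| = s⁻ᵏ`, since each column occurs evenly.
-/

open MeasureTheory ProbabilityTheory Finset

namespace ToeplitzMoment

section Rademacher

variable {Ω : Type*} [MeasurableSpace Ω] {μ : Measure Ω} [IsProbabilityMeasure μ]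

def IsRademacher (μ : Measure Ω) (X : Ω → ℝ) : Prop :=
  μ {ω | X ω = 1} = 1 / 2 ∧ μ {ω | X ω = -1} = 1 / 2

namespace IsRademacher

variable {X : Ω → ℝ}

lemma ae_eq_one_or_neg_one (hX : IsRademacher μ X) (hXm : Measurable X) :
    ∀ᵐ ω ∂μ, X ω = 1 ∨ X ω = -1 := by
  have hdisj : Disjoint {ω | X ω = 1} {ω | X ω = -1} :=
    Set.disjoint_left.2 fun ω (h1 : X ω = 1) (h2 : X ω = -1) => by linarith
  have hunion : μ ({ω | X ω = 1} ∪ {ω | X ω = -1}) = 1 := by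
    rw [measure_union hdisj (hXm (measurableSet_singleton _)), hX.1, hX.2, ENNReal.add_halves]
  exact mem_ae_iff.2 <| (prob_compl_eq_zero_iff <|
    (hXm (measurableSet_singleton 1)).union (hXm (measurableSet_singleton (-1)))).2 hunion

lemma integral_pow (hX : IsRademacher μ X) (hXm : Measurable X) (c : ℕ) :
    ∫ ω, X ω ^ c ∂μ = if Even c then 1 else 0 := by
  have hA : MeasurableSet {ω | X ω = 1} := hXm (measurableSet_singleton 1)
  have hB : MeasurableSet {ω | X ω = -1} := hXm (measurableSet_singleton (-1))
  have hae : (fun ω => X ω ^ c) =ᵐ[μ] fun ω =>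
      {ω | X ω = 1}.indicator (fun _ => (1 : ℝ)) ω +
        {ω | X ω = -1}.indicator (fun _ => (-1 : ℝ) ^ c) ω := by
    filter_upwards [hX.ae_eq_one_or_neg_one hXm] with ω hω
    rcases hω with h | h <;> norm_num [Set.indicator_apply, h]
  rw [integral_congr_ae hae, integral_add ((integrable_const _).indicator hA)
      ((integrable_const _).indicator hB), integral_indicator_const _ hA,
    integral_indicator_const _ hB, measureReal_def, measureReal_def, hX.1, hX.2]
  rcases Nat.even_or_odd c with hc | hc
  · norm_num [hc, hc.neg_one_pow]
  · norm_num [Nat.not_even_iff_odd.2 hc, hc.neg_one_pow]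

lemma ae_sq_eq_one (hX : IsRademacher μ X) (hXm : Measurable X) : ∀ᵐ ω ∂μ, X ω ^ 2 = 1 := by
  filter_upwards [hX.ae_eq_one_or_neg_one hXm] with ω hω
  rcases hω with h | h <;> simp [h]

end IsRademacher

variable {ι α : Type*} [Fintype α] {Y : ι → Ω → ℝ}

lemma integrable_prod_rademacher (hYm : ∀ i, Measurable (Y i)) (hY : ∀ i, IsRademacher μ (Y i))
    (f : α → ι) : Integrable (fun ω => ∏ a, Y (f a) ω) μ := by
  refine .of_bound (Finset.measurable_prod _ fun a _ => hYm (f a)).aestronglyMeasurable 1 ?_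
  filter_upwards [ae_all_iff.2 fun a => (hY (f a)).ae_eq_one_or_neg_one (hYm (f a))] with ω hω
  rw [Real.norm_eq_abs, Finset.abs_prod]
  exact Finset.prod_le_one (fun _ _ => abs_nonneg _) fun a _ => by
    rcases hω a with h | h <;> simp [h]

open scoped Classical in
lemma integral_prod_rademacher [DecidableEq ι] (hYm : ∀ i, Measurable (Y i))
    (hY : ∀ i, IsRademacher μ (Y i)) (hindep : iIndepFun Y μ) (f : α → ι) :
    ∫ ω, ∏ a, Y (f a) ω ∂μ = if ∀ i, Even #{a | f a = i} then 1 else 0 := by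
  set F := univ.image f
  have hfactor : ∀ ω, ∏ a, Y (f a) ω = ∏ i : F, Y i ω ^ #{a | f a = i} := fun ω => by
    rw [prod_comp (fun i => Y i ω) f, ← prod_coe_sort]
  simp_rw [hfactor]
  rw [(hindep.precomp (g := ((↑) : F → ι)) Subtype.val_injective).integral_fun_prod_comp
      (f := fun (i : F) (y : ℝ) => y ^ #{a | f a = i}) (fun i => (hYm i).aemeasurable)
      (fun i => (measurable_id.pow_const _).aestronglyMeasurable)]
  simp_rw [(hY _).integral_pow (hYm _)]
  rw [Fintype.prod_boole]
  refine if_congr ⟨fun h i => ?_, fun h i => h i⟩ rfl rfl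
  by_cases hi : i ∈ F
  · exact h ⟨i, hi⟩
  · rw [card_eq_zero.2 (filter_eq_empty_iff.2 fun a _ (ha : f a = i) =>
      hi (ha ▸ mem_image_of_mem f (mem_univ a)))]
    exact Even.zero

end Rademacher

section Counting

variable {α β γ δ : Type*} [Fintype α] [Fintype β] [DecidableEq γ] [DecidableEq δ]

lemma card_filter_sum_elim (u : α → γ) (w : β → γ) (c : γ) :
    #{q | Sum.elim u w q = c} = #{a | u a = c} + #{b | w b = c} := by
  rw [card_filter, card_filter, card_filter, Fintype.sum_sum_type]
  rfl

lemma card_filter_or_of_ne {u w : α → γ} (huw : ∀ a, u a ≠ w a) (c : γ) :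
    #{a | u a = c ∨ w a = c} = #{a | u a = c} + #{a | w a = c} := by
  rw [card_filter, card_filter, card_filter, ← sum_add_distrib]
  refine sum_congr rfl fun a _ => ?_
  by_cases h1 : u a = c <;> by_cases h2 : w a = c
  · exact absurd (h1.trans h2.symm) (huw a)
  all_goals simp [h1, h2]

lemma forall_even_card_sum_map_iff (u : α → γ) (w : β → δ) :
    (∀ v, Even #{q | Sum.map u w q = v}) ↔
      (∀ c, Even #{a | u a = c}) ∧ ∀ c, Even #{b | w b = c} := by
  simp only [Sum.forall, card_filter, Fintype.sum_sum_type, Sum.map_inl, Sum.map_inr,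
    Sum.inl.injEq, Sum.inr.injEq, reduceCtorEq, if_false, sum_const_zero, add_zero, zero_add]

lemma prod_comp_eq_prod_abs_of_even {R : Type*} [CommRing R] [LinearOrder R]
    [IsStrictOrderedRing R] (g : γ → R) (f : α → γ) (hf : ∀ c, Even #{a | f a = c}) :
    ∏ a, g (f a) = ∏ a, |g (f a)| := by
  rw [prod_comp g f, prod_comp (fun c => |g c|) f]
  exact prod_congr rfl fun c _ => ((hf c).pow_abs _).symm

lemma sq_sum_eq_sum_sq_add_sum_ne [DecidableEq α] {R : Type*} [CommSemiring R] (a : α → R) :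
    (∑ j, a j) ^ 2 = ∑ j, a j ^ 2 + ∑ j, ∑ h, if j ≠ h then a j * a h else 0 := by
  rw [sq, sum_mul_sum, ← sum_add_distrib]
  refine sum_congr rfl fun j _ => ?_
  rw [sq, ← Fintype.sum_ite_eq j (fun h => a j * a h), ← sum_add_distrib]
  exact sum_congr rfl fun h _ => by split_ifs <;> simp_all

lemma sum_ite_eq_natCard_mul {R : Type*} [Semiring R] (p : α → Prop) [DecidablePred p] (c : R) :
    ∑ a, (if p a then c else 0) = Nat.card {a // p a} * c := by
  rw [← sum_filter, sum_const, nsmul_eq_mul, Nat.card_eq_fintype_card, Fintype.card_subtype]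

end Counting

section Toeplitz

variable {Ω : Type*} (t : ℤ → Ω → ℝ) (d : ℕ → Ω → ℝ) (x : ℕ → ℝ) {k m n s : ℕ}

/-- The term `T_{ij} D_{jj} x_j` of `T D x`, where `T` is the Toeplitz matrix `T_{ij} = t_{j-i}`. -/
def entry (i j : ℕ) (ω : Ω) : ℝ := t ((j : ℤ) - (i : ℤ)) ω * d j ω * x j

def crossTerm (p : Fin m × Fin s × Fin s) (ω : Ω) : ℝ :=
  if p.2.1 ≠ p.2.2 then entry t d x p.1 p.2.1 ω * entry t d x p.1 p.2.2 ω else 0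

def signs (s : ℕ) (v : ℤ ⊕ Fin s) : Ω → ℝ := Sum.elim t d (Sum.map id Fin.val v)

/-- The endpoints of a `k`-tuple of triples `(i, j, h)` are indexed by `Fin k ⊕ Fin k`: `inl l` is
the `j` and `inr l` the `h` of the `l`-th triple. -/
def column (S : Fin k → Fin m × Fin s × Fin s) : Fin k ⊕ Fin k → Fin s :=
  Sum.elim (fun l => (S l).2.1) (fun l => (S l).2.2)

def diagonal (S : Fin k → Fin m × Fin s × Fin s) : Fin k ⊕ Fin k → ℤ :=
  Sum.elim (fun l => ((S l).2.1 : ℤ) - ((S l).1 : ℤ)) (fun l => ((S l).2.2 : ℤ) - ((S l).1 : ℤ))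

def TouchesEvenly (S : Fin k → Fin m × Fin s × Fin s) : Prop :=
  (∀ a : Fin s, Even #{l | (S l).2.1 = a ∨ (S l).2.2 = a}) ∧
    ∀ a : ℤ, Even #{l | ((S l).2.1 : ℤ) - ((S l).1 : ℤ) = a ∨ ((S l).2.2 : ℤ) - ((S l).1 : ℤ) = a}

variable {t d x}

lemma sum_range_entry_eq (hsn : s ≤ n) (hx0 : ∀ j, s ≤ j → x j = 0) (i : ℕ) (ω : Ω) :
    ∑ j ∈ range n, entry t d x i j ω = ∑ j : Fin s, entry t d x i j ω := by
  rw [← sum_range fun j => entry t d x i j ω]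
  refine (sum_subset (range_subset_range.2 hsn) fun j _ hj => ?_).symm
  simp [entry, hx0 j (by simpa using hj)]

lemma sum_entry_sq_eq_one {ω : Ω} (htω : ∀ a, t a ω ^ 2 = 1) (hdω : ∀ j, d j ω ^ 2 = 1)
    (hs : 0 < s) (hx : ∀ j < s, x j = 1 / √s ∨ x j = -(1 / √s)) (i : ℕ) :
    ∑ j : Fin s, entry t d x i j ω ^ 2 = 1 := by
  have hxsq : ∀ j : Fin s, x j ^ 2 = 1 / s := fun j => by
    rcases hx j j.isLt with h | h <;> simp [h]
  simp only [entry, mul_pow, htω, hdω, one_mul, hxsq, sum_const, card_univ, Fintype.card_fin,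
    nsmul_eq_mul]
  field_simp

lemma normSq_sub_one_eq_sum_crossTerm {ω : Ω} (htω : ∀ a, t a ω ^ 2 = 1) (hdω : ∀ j, d j ω ^ 2 = 1)
    (hm : 0 < m) (hs : 0 < s) (hsn : s ≤ n) (hx : ∀ j < s, x j = 1 / √s ∨ x j = -(1 / √s))
    (hx0 : ∀ j, s ≤ j → x j = 0) :
    (1 / (m : ℝ)) * ∑ i ∈ range m, (∑ j ∈ range n, entry t d x i j ω) ^ 2 - 1 =
      (1 / (m : ℝ)) * ∑ p : Fin m × Fin s × Fin s, crossTerm t d x p ω := by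
  simp_rw [crossTerm, sum_range_entry_eq hsn hx0, sq_sum_eq_sum_sq_add_sum_ne,
    sum_entry_sq_eq_one htω hdω hs hx, sum_range, sum_add_distrib, Fintype.sum_prod_type]
  simp only [sum_const, card_univ, Fintype.card_fin, nsmul_eq_mul, mul_one]
  field_simp
  ring

variable {S : Fin k → Fin m × Fin s × Fin s}

lemma card_column_eq (hS : ∀ l, (S l).2.1 ≠ (S l).2.2) (b : Fin s) :
    #{q | column S q = b} = #{l | (S l).2.1 = b ∨ (S l).2.2 = b} := by
  rw [column, card_filter_sum_elim, card_filter_or_of_ne hS]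

lemma card_diagonal_eq (hS : ∀ l, (S l).2.1 ≠ (S l).2.2) (a : ℤ) :
    #{q | diagonal S q = a} =
      #{l | ((S l).2.1 : ℤ) - ((S l).1 : ℤ) = a ∨ ((S l).2.2 : ℤ) - ((S l).1 : ℤ) = a} := by
  rw [diagonal, card_filter_sum_elim, card_filter_or_of_ne fun l h => hS l (Fin.ext (by omega))]

lemma touchesEvenly_iff (hS : ∀ l, (S l).2.1 ≠ (S l).2.2) :
    TouchesEvenly S ↔ ∀ v, Even #{q | Sum.map (diagonal S) (column S) q = v} := by
  rw [forall_even_card_sum_map_iff, TouchesEvenly, and_comm]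
  simp only [card_column_eq hS, card_diagonal_eq hS]

lemma prod_comp_column_eq (hx : ∀ j < s, x j = 1 / √s ∨ x j = -(1 / √s))
    (hS : ∀ l, (S l).2.1 ≠ (S l).2.2) (hSe : TouchesEvenly S) :
    ∏ q, x (column S q) = (1 / (s : ℝ)) ^ k := by
  rw [prod_comp_eq_prod_abs_of_even (fun b : Fin s => x b) (column S)
    fun b => card_column_eq hS b ▸ hSe.1 b]
  have habs : ∀ b : Fin s, |x b| = 1 / √s := fun b => by
    rcases hx b b.isLt with h | h <;> simp [h]
  simp only [habs, prod_const, card_univ, Fintype.card_sum, Fintype.card_fin, ← two_mul, pow_mul,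
    div_pow, one_pow, Real.sq_sqrt (Nat.cast_nonneg _)]

lemma prod_entry_mul_entry_eq (S : Fin k → Fin m × Fin s × Fin s) (ω : Ω) :
    ∏ l, entry t d x (S l).1 (S l).2.1 ω * entry t d x (S l).1 (S l).2.2 ω =
      (∏ q, x (column S q)) * ∏ a, signs t d s (Sum.map (diagonal S) (column S) a) ω := by
  simp only [entry, signs, column, diagonal, Fintype.prod_sum_type, Sum.map_inl, Sum.map_inr,
    Sum.elim_inl, Sum.elim_inr, id, ← prod_mul_distrib]
  exact prod_congr rfl fun l _ => by ring

variable [MeasurableSpace Ω] {μ : Measure Ω}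

lemma iIndepFun_signs (hindep : iIndepFun (Sum.elim t d) μ) : iIndepFun (signs t d s) μ :=
  hindep.precomp (g := Sum.map id Fin.val)
    (Sum.map_injective.2 ⟨Function.injective_id, Fin.val_injective⟩)

variable [IsProbabilityMeasure μ]

lemma integrable_prod_crossTerm (hYm : ∀ v, Measurable (Sum.elim t d v))
    (hY : ∀ v, IsRademacher μ (Sum.elim t d v)) (S : Fin k → Fin m × Fin s × Fin s) :
    Integrable (fun ω => ∏ l, crossTerm t d x (S l) ω) μ := by
  simp_rw [crossTerm, Fintype.prod_ite_zero]
  split_ifs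
  · simp_rw [prod_entry_mul_entry_eq]
    exact (integrable_prod_rademacher (Y := signs t d s) (fun _ => hYm _) (fun _ => hY _) _).const_mul _
  · exact integrable_zero _ _ _

open scoped Classical in
lemma integral_prod_entry (hYm : ∀ v, Measurable (Sum.elim t d v))
    (hY : ∀ v, IsRademacher μ (Sum.elim t d v)) (hindep : iIndepFun (Sum.elim t d) μ)
    (hx : ∀ j < s, x j = 1 / √s ∨ x j = -(1 / √s)) (hS : ∀ l, (S l).2.1 ≠ (S l).2.2) :
    ∫ ω, ∏ l, entry t d x (S l).1 (S l).2.1 ω * entry t d x (S l).1 (S l).2.2 ω ∂μ =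
      if TouchesEvenly S then (1 / (s : ℝ)) ^ k else 0 := by
  simp_rw [prod_entry_mul_entry_eq]
  rw [integral_const_mul, integral_prod_rademacher (Y := signs t d s) (fun _ => hYm _)
    (fun _ => hY _) (iIndepFun_signs hindep), ← touchesEvenly_iff hS]
  split_ifs with hSe
  · rw [prod_comp_column_eq hx hS hSe, mul_one]
  · rw [mul_zero]

open scoped Classical in
lemma integral_prod_crossTerm (hYm : ∀ v, Measurable (Sum.elim t d v))
    (hY : ∀ v, IsRademacher μ (Sum.elim t d v)) (hindep : iIndepFun (Sum.elim t d) μ)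
    (hx : ∀ j < s, x j = 1 / √s ∨ x j = -(1 / √s)) (S : Fin k → Fin m × Fin s × Fin s) :
    ∫ ω, ∏ l, crossTerm t d x (S l) ω ∂μ =
      if (∀ l, (S l).2.1 ≠ (S l).2.2) ∧ TouchesEvenly S then (1 / (s : ℝ)) ^ k else 0 := by
  simp_rw [crossTerm, Fintype.prod_ite_zero]
  by_cases hS : ∀ l, (S l).2.1 ≠ (S l).2.2
  · simp only [if_pos hS, and_iff_right hS]
    exact integral_prod_entry hYm hY hindep hx hS
  · simp only [hS, false_and, if_false, integral_zero]

end Toeplitz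

end ToeplitzMoment

open ToeplitzMoment

theorem moment_eq_gamma_general {Ω : Type*} [MeasurableSpace Ω] (μ : Measure Ω)
    [IsProbabilityMeasure μ]
    (m n s : ℕ) (hm : 0 < m) (hs : 0 < s) (hsn : s ≤ n)
    (t : ℤ → Ω → ℝ) (d : ℕ → Ω → ℝ)
    (ht : ∀ a, Measurable (t a)) (hd : ∀ j, Measurable (d j))
    (hrad_t : ∀ a : ℤ, μ {ω | t a ω = 1} = 1/2 ∧ μ {ω | t a ω = -1} = 1/2)
    (hrad_d : ∀ j : ℕ, μ {ω | d j ω = 1} = 1/2 ∧ μ {ω | d j ω = -1} = 1/2)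
    (hindep : ProbabilityTheory.iIndepFun (Sum.elim t d) μ)
    (x : ℕ → ℝ)
    (hx : ∀ j < s, x j = 1 / Real.sqrt s ∨ x j = -(1 / Real.sqrt s))
    (hx0 : ∀ j, s ≤ j → x j = 0)
    (k : ℕ) :
    ∫ ω, ((1 / (m : ℝ)) * ∑ i ∈ Finset.range m,
        (∑ j ∈ Finset.range n, t ((j : ℤ) - (i : ℤ)) ω * d j ω * x j) ^ 2 - 1) ^ k ∂μ
    = (Nat.card {S : Fin k → Fin m × Fin s × Fin s //
          (∀ l, (S l).2.1 ≠ (S l).2.2) ∧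
          (∀ a : Fin s,
            Even (Finset.univ.filter fun l => (S l).2.1 = a ∨ (S l).2.2 = a).card) ∧
          (∀ a : ℤ,
            Even (Finset.univ.filter fun l =>
              ((S l).2.1 : ℤ) - ((S l).1 : ℤ) = a ∨
                ((S l).2.2 : ℤ) - ((S l).1 : ℤ) = a).card)} : ℝ) /
        ((s : ℝ) ^ k * (m : ℝ) ^ k) := by
  have hYm : ∀ v, Measurable (Sum.elim t d v) := Sum.forall.2 ⟨ht, hd⟩
  have hY : ∀ v, IsRademacher μ (Sum.elim t d v) := Sum.forall.2 ⟨hrad_t, hrad_d⟩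
  have hexpand : (fun ω => ((1 / (m : ℝ)) * ∑ i ∈ range m,
        (∑ j ∈ range n, entry t d x i j ω) ^ 2 - 1) ^ k) =ᵐ[μ] fun ω =>
      (1 / (m : ℝ)) ^ k * ∑ S : Fin k → Fin m × Fin s × Fin s, ∏ l, crossTerm t d x (S l) ω := by
    filter_upwards [ae_all_iff.2 fun a => IsRademacher.ae_sq_eq_one (hrad_t a) (ht a),
      ae_all_iff.2 fun j => IsRademacher.ae_sq_eq_one (hrad_d j) (hd j)] with ω htω hdω
    rw [normSq_sub_one_eq_sum_crossTerm htω hdω hm hs hsn hx hx0, mul_pow, Fintype.sum_pow]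
  have hscale : ∀ c : ℝ, (1 / (m : ℝ)) ^ k * (c * (1 / (s : ℝ)) ^ k) = c / (s ^ k * m ^ k) :=
    fun c => by ring
  refine (integral_congr_ae hexpand).trans ?_
  rw [integral_const_mul, integral_finsetSum _ fun S _ => integrable_prod_crossTerm hYm hY S]
  simp only [integral_prod_crossTerm hYm hY hindep hx, sum_ite_eq_natCard_mul]
  exact hscale _

/-- For even `k`, `E[Z_k] = Γ_k / (s^k m^k)`, where
`Z_k = (‖(1/√m) T D x‖² − 1)^k` and `Γ_k` counts tuples `S ∈ ([m] × [s] × [s])^k` with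
`j ≠ h` in each triple, each column touched an even number of times, and each diagonal
touched an even number of times. -/
theorem moment_eq_gamma {Ω : Type*} [MeasurableSpace Ω] (μ : Measure Ω)
    [IsProbabilityMeasure μ]
    (m n s : ℕ) (hm : 0 < m) (hs : 0 < s) (hsn : s ≤ n)
    (t : ℤ → Ω → ℝ) (d : ℕ → Ω → ℝ)
    (ht : ∀ a, Measurable (t a)) (hd : ∀ j, Measurable (d j))
    (hrad_t : ∀ a : ℤ, μ {ω | t a ω = 1} = 1/2 ∧ μ {ω | t a ω = -1} = 1/2)
    (hrad_d : ∀ j : ℕ, μ {ω | d j ω = 1} = 1/2 ∧ μ {ω | d j ω = -1} = 1/2)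
    (hindep : ProbabilityTheory.iIndepFun (Sum.elim t d) μ)
    (x : ℕ → ℝ)
    (hx : ∀ j < s, x j = 1 / Real.sqrt s ∨ x j = -(1 / Real.sqrt s))
    (hx0 : ∀ j, s ≤ j → x j = 0)
    (k : ℕ) (hk : 0 < k) (hkeven : Even k) :
    ∫ ω, ((1 / (m : ℝ)) * ∑ i ∈ Finset.range m,
        (∑ j ∈ Finset.range n, t ((j : ℤ) - (i : ℤ)) ω * d j ω * x j) ^ 2 - 1) ^ k ∂μ
    = (Nat.card {S : Fin k → Fin m × Fin s × Fin s //
          (∀ l, (S l).2.1 ≠ (S l).2.2) ∧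
          (∀ a : Fin s,
            Even (Finset.univ.filter fun l => (S l).2.1 = a ∨ (S l).2.2 = a).card) ∧
          (∀ a : ℤ,
            Even (Finset.univ.filter fun l =>
              ((S l).2.1 : ℤ) - ((S l).1 : ℤ) = a ∨
                ((S l).2.2 : ℤ) - ((S l).1 : ℤ) = a).card)} : ℝ) /
        ((s : ℝ) ^ k * (m : ℝ) ^ k) :=
  moment_eq_gamma_general μ m n s hm hs hsn t d ht hd hrad_t hrad_d hindep x hx hx0 k
end

section
/- Suppose that for every unit vector x ∈ ℝ^n, Pr[ |‖(1/√m) T D x‖₂² − 1| < ε ] > 1 − δ, where T, D are the Toeplitz and diagonal Rademacher matrices. If additionally the single-vector failure bound Pr[failure] ≥ 2^{−C ε √m} holds for some unit vector (as guaranteed by the main theorem), then m ≥ c · ε^{−2} · log²(1/δ) for some absolute constant c > 0. -/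
open MeasureTheory Finset

/-!
A unit vector whose failure probability is at least `2^{-Cε√m}` forces `2^{-Cε√m} ≤ δ`, since the
failure event is disjoint from the success event of probability `> 1 - δ`. Taking logarithms gives
`log(1/δ) < C log 2 · ε√m`, and squaring gives `m > (C log 2)⁻² ε⁻² log²(1/δ)`.
-/

/-- The distortion `‖(1/√m) T D x‖₂² − 1` of the Toeplitz-times-diagonal embedding, where
`T i j = t (j - i)` and `D = diag d`. -/
noncomputable def toeplitzDistortion {Ω : Type*} (m n : ℕ) (t : ℤ → Ω → ℝ) (d : ℕ → Ω → ℝ)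
    (x : ℕ → ℝ) (ω : Ω) : ℝ :=
  (1 / (m : ℝ)) * ∑ i ∈ range m,
    (∑ j ∈ range n, t ((j : ℤ) - (i : ℤ)) ω * d j ω * x j) ^ 2 - 1

theorem measurable_toeplitzDistortion {Ω : Type*} [MeasurableSpace Ω] (m n : ℕ)
    {t : ℤ → Ω → ℝ} {d : ℕ → Ω → ℝ} (ht : ∀ a, Measurable (t a)) (hd : ∀ j, Measurable (d j))
    (x : ℕ → ℝ) : Measurable (toeplitzDistortion m n t d x) := by
  unfold toeplitzDistortion
  fun_prop

theorem measureReal_lt_abs_le_one_sub {Ω : Type*} [MeasurableSpace Ω] (μ : Measure Ω)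
    [IsProbabilityMeasure μ] {f : Ω → ℝ} (hf : Measurable f) (ε : ℝ) :
    μ.real {ω | ε < |f ω|} ≤ 1 - μ.real {ω | |f ω| < ε} := by
  rw [← probReal_compl_eq_one_sub (measurableSet_lt hf.abs measurable_const)]
  exact measureReal_mono fun ω (hω : ε < |f ω|) => not_lt.mpr hω.le

theorem log_one_div_lt_mul_log_two_of_two_rpow_neg_lt {a δ : ℝ} (h : (2 : ℝ) ^ (-a) < δ) :
    Real.log (1 / δ) < a * Real.log 2 := by
  have hlog := Real.log_lt_log (by positivity) h
  rw [Real.log_rpow two_pos] at hlog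
  rw [one_div, Real.log_inv]
  linarith

theorem mul_sq_log_le_of_two_rpow_neg_lt {C ε δ m : ℝ} (hC : 0 < C) (hε : 0 < ε)
    (hδ : 0 < δ) (hδ1 : δ < 1) (hm : 0 ≤ m) (h : (2 : ℝ) ^ (-(C * ε * Real.sqrt m)) < δ) :
    ((C * Real.log 2)⁻¹) ^ 2 * ε⁻¹ ^ 2 * Real.log (1 / δ) ^ 2 ≤ m := by
  have hlog2 : 0 < Real.log 2 := Real.log_pos one_lt_two
  have hL : 0 < Real.log (1 / δ) := Real.log_pos (by rw [one_div]; exact one_lt_inv₀ hδ |>.mpr hδ1)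
  have hlt : Real.log (1 / δ) < C * Real.log 2 * ε * Real.sqrt m := by
    linarith [log_one_div_lt_mul_log_two_of_two_rpow_neg_lt h]
  calc ((C * Real.log 2)⁻¹) ^ 2 * ε⁻¹ ^ 2 * Real.log (1 / δ) ^ 2
      = (Real.log (1 / δ) / (C * Real.log 2 * ε)) ^ 2 := by field_simp
    _ ≤ Real.sqrt m ^ 2 := by
      gcongr
      rw [div_le_iff₀ (by positivity)]
      linarith
    _ = m := Real.sq_sqrt hm

/-- If every unit vector has its norm preserved within `ε` with probability `> 1 − δ` by the
Toeplitz-times-diagonal Rademacher embedding, while some unit vector fails with probability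
at least `2^{−Cε√m}`, then `m ≥ c ε^{−2} log²(1/δ)` for a constant `c > 0` depending only
on `C`. -/
theorem dimension_lower_bound (C : ℝ) (hC : 0 < C) :
    ∃ c : ℝ, 0 < c ∧
      ∀ {Ω : Type} [MeasurableSpace Ω] (μ : Measure Ω), IsProbabilityMeasure μ →
      ∀ (m n : ℕ), 0 < m →
      ∀ (t : ℤ → Ω → ℝ) (d : ℕ → Ω → ℝ),
      (∀ a, Measurable (t a)) → (∀ j, Measurable (d j)) →
      (∀ a : ℤ, μ {ω | t a ω = 1} = 1/2 ∧ μ {ω | t a ω = -1} = 1/2) →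
      (∀ j : ℕ, μ {ω | d j ω = 1} = 1/2 ∧ μ {ω | d j ω = -1} = 1/2) →
      ProbabilityTheory.iIndepFun (Sum.elim t d) μ →
      ∀ ε δ : ℝ, 0 < ε → 0 < δ → δ < 1 →
      (∀ x : ℕ → ℝ, (∑ j ∈ Finset.range n, x j ^ 2 = 1) →
        1 - δ < (μ {ω | |(1 / (m : ℝ)) * ∑ i ∈ Finset.range m,
            (∑ j ∈ Finset.range n, t ((j : ℤ) - (i : ℤ)) ω * d j ω * x j) ^ 2 - 1| < ε}).toReal) →
      (∃ x : ℕ → ℝ, (∑ j ∈ Finset.range n, x j ^ 2 = 1) ∧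
        (2 : ℝ) ^ (-(C * ε * Real.sqrt m)) ≤
          (μ {ω | ε < |(1 / (m : ℝ)) * ∑ i ∈ Finset.range m,
              (∑ j ∈ Finset.range n, t ((j : ℤ) - (i : ℤ)) ω * d j ω * x j) ^ 2 - 1|}).toReal) →
      c * ε⁻¹ ^ 2 * Real.log (1 / δ) ^ 2 ≤ (m : ℝ) := by
  refine ⟨((C * Real.log 2)⁻¹) ^ 2, by have := Real.log_pos one_lt_two; positivity, ?_⟩
  intro Ω _ μ _ m n _ t d ht hd _ _ _ ε δ hε hδ hδ1 hsucc ⟨x, hx, hfail⟩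
  have hfail_le := measureReal_lt_abs_le_one_sub μ (measurable_toeplitzDistortion m n ht hd x) ε
  have hsmall : (2 : ℝ) ^ (-(C * ε * Real.sqrt m)) < δ := by
    have := hsucc x hx
    simp only [toeplitzDistortion, measureReal_def] at hfail_le
    linarith
  exact mul_sq_log_le_of_two_rpow_neg_lt hC hε hδ hδ1 m.cast_nonneg hsmall
end

section
/- Let x ∈ ℝ^n have support contained in {1, …, r} and let x_{→i} denote x shifted by i coordinates (coordinate j of x_{→i} equals coordinate j−i of x when j > i, else 0). With T the m × n Toeplitz matrix and D the diagonal matrix built from independent Rademacher variables, if i ≤ n − r then T D x and T D x_{→i} have the same distribution, and if additionally i ≥ m + r then T D x and T D x_{→i} are independent random vectors. -/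
/-!
Only the signs `t_a` with `-m < a < r` and `d_j` with `j < r` enter `T D x`, and `T D x_{→i}` is
the same function of these signs shifted by `i`. A family of independent Rademacher signs
reindexed injectively is again such a family, so both vectors are the same function of
identically distributed sign vectors. For `i ≥ m + r` the two shifted windows of signs are
disjoint, hence independent.
-/

open MeasureTheory Finset ProbabilityTheory

noncomputable def rademacher : Measure ℝ :=
  (1 / 2 : ENNReal) • Measure.dirac 1 + (1 / 2 : ENNReal) • Measure.dirac (-1)

lemma map_eq_rademacher {Ω : Type*} [MeasurableSpace Ω] {μ : Measure Ω} [IsProbabilityMeasure μ]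
    {X : Ω → ℝ} (hX : Measurable X) (h₁ : μ {ω | X ω = 1} = 1 / 2)
    (h₂ : μ {ω | X ω = -1} = 1 / 2) :
    μ.map X = rademacher := by
  have := Measure.isProbabilityMeasure_map (μ := μ) hX.aemeasurable
  have hsingleton (a : ℝ) : μ.map X {a} = μ {ω | X ω = a} :=
    Measure.map_apply hX (measurableSet_singleton a)
  have hdisj : Disjoint ({1} : Set ℝ) {-1} := by norm_num
  have hsupport : ∀ᵐ y ∂μ.map X, y ∈ ({1} : Set ℝ) ∪ {-1} := by
    rw [ae_mem_iff_measure_eq (by measurability), measure_union hdisj (measurableSet_singleton _),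
      hsingleton, hsingleton, h₁, h₂, ENNReal.add_halves, measure_univ]
  calc μ.map X = (μ.map X).restrict ({1} ∪ {-1}) :=
        (Measure.restrict_eq_self_of_ae_mem hsupport).symm
    _ = (μ.map X).restrict {1} + (μ.map X).restrict {-1} :=
      Measure.restrict_union hdisj (measurableSet_singleton _)
    _ = rademacher := by
      rw [Measure.restrict_singleton, Measure.restrict_singleton, hsingleton, hsingleton, h₁, h₂,
        rademacher]

lemma comap_reindex_le_iSup {Ω ι κ β : Type*} [mβ : MeasurableSpace β] (X : ι → Ω → β)
    (e : κ → ι) :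
    MeasurableSpace.comap (fun ω k => X (e k) ω) MeasurableSpace.pi ≤
      ⨆ i ∈ Set.range e, mβ.comap (X i) := by
  let _ : MeasurableSpace Ω := ⨆ i ∈ Set.range e, mβ.comap (X i)
  refine Measurable.comap_le (measurable_pi_iff.2 fun k => ?_)
  exact measurable_iff_comap_le.2 <|
    le_iSup₂ (f := fun i (_ : i ∈ Set.range e) => mβ.comap (X i)) (e k) ⟨k, rfl⟩

namespace ProbabilityTheory

variable {Ω ι κ₁ κ₂ β : Type*} [MeasurableSpace Ω] {μ : Measure Ω} [MeasurableSpace β]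
  {X : ι → Ω → β}

lemma iIndepFun.map_reindex_eq_infinitePi (h : iIndepFun X μ) (hX : ∀ i, Measurable (X i))
    {ν : Measure β} (hν : ∀ i, μ.map (X i) = ν) {e : κ₁ → ι} (he : e.Injective) :
    μ.map (fun ω k => X (e k) ω) = Measure.infinitePi fun _ => ν := by
  rw [(h.precomp he).map_fun_eq_infinitePi_map fun k => hX (e k)]
  simp_rw [hν]

lemma iIndepFun.indepFun_reindex_of_disjoint (h : iIndepFun X μ) (hX : ∀ i, Measurable (X i))
    {e₁ : κ₁ → ι} {e₂ : κ₂ → ι} (hdisj : Disjoint (Set.range e₁) (Set.range e₂)) :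
    IndepFun (fun ω k => X (e₁ k) ω) (fun ω k => X (e₂ k) ω) μ :=
  indep_of_indep_of_le_right
    (indep_of_indep_of_le_left
      (indep_iSup_of_disjoint (fun i => (hX i).comap_le) ((iIndepFun_iff_iIndep _ _ _).1 h) hdisj)
      (comap_reindex_le_iSup X e₁))
    (comap_reindex_le_iSup X e₂)

end ProbabilityTheory

lemma sum_range_mul_shift {x : ℕ → ℝ} {r : ℕ} (hx : ∀ j, r ≤ j → x j = 0) {c n : ℕ}
    (hn : c + r ≤ n) (f : ℕ → ℝ) :
    ∑ j ∈ range n, f j * (if c ≤ j then x (j - c) else 0) = ∑ j ∈ range r, f (c + j) * x j := by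
  rw [← sum_subset (range_subset_range.2 hn), sum_range_add, sum_eq_zero, zero_add]
  · simp
  · intro j hj
    rw [if_neg (by simp at hj; omega), mul_zero]
  · intro j _ hj
    rw [hx (j - c) (by simp at hj; omega), ite_self, mul_zero]

/-- `.inl a` stands for the sign `t_a` and `.inr j` for the sign `d_j`. -/
abbrev SignWindow (m r : ℕ) : Type := Set.Ioo (-(m : ℤ)) r ⊕ Fin r

section Toeplitz

variable {m r : ℕ}

def windowShift (m r c : ℕ) : SignWindow m r → ℤ ⊕ ℕ :=
  Sum.map (fun a => (a : ℤ) + c) (fun j => (j : ℕ) + c)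

/-- Coordinate `i'` of `T D x` when the signs in the window are given by `v`. -/
def toeplitzSum (m r : ℕ) (x : ℕ → ℝ) (v : SignWindow m r → ℝ) (i' : Fin m) : ℝ :=
  ∑ j : Fin r, v (.inl ⟨j - i', by have := i'.isLt; omega, by have := j.isLt; omega⟩) *
    v (.inr j) * x j

lemma windowShift_injective (m r c : ℕ) : (windowShift m r c).Injective :=
  Sum.map_injective.2 ⟨fun a b h => Subtype.ext (by simpa using h),
    fun j k h => Fin.ext (by simpa using h)⟩

lemma disjoint_range_windowShift {c₁ c₂ : ℕ} (h : c₁ + m + r ≤ c₂) :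
    Disjoint (Set.range (windowShift m r c₁)) (Set.range (windowShift m r c₂)) := by
  rw [Set.disjoint_left]
  rintro _ ⟨a | j, rfl⟩ ⟨b | k, hk⟩ <;> simp [windowShift] at hk
  · have := a.2.2; have := b.2.1; omega
  · have := j.isLt; omega

lemma measurable_toeplitzSum (m r : ℕ) (x : ℕ → ℝ) : Measurable (toeplitzSum m r x) := by
  unfold toeplitzSum
  fun_prop

lemma toeplitz_shift_eq_toeplitzSum {Ω : Type*} (t : ℤ → Ω → ℝ) (d : ℕ → Ω → ℝ) {x : ℕ → ℝ}
    (hx : ∀ j, r ≤ j → x j = 0) {c n : ℕ} (hn : c + r ≤ n) :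
    (fun ω (i' : Fin m) =>
        ∑ j ∈ range n, t ((j : ℤ) - (i' : ℤ)) ω * d j ω * (if c ≤ j then x (j - c) else 0)) =
      fun ω => toeplitzSum m r x fun k => Sum.elim t d (windowShift m r c k) ω := by
  ext ω i'
  rw [sum_range_mul_shift hx hn, ← Fin.sum_univ_eq_sum_range]
  refine sum_congr rfl fun j _ => ?_
  simp only [windowShift, Sum.map_inl, Sum.map_inr, Sum.elim_inl, Sum.elim_inr]
  congr 3 <;> push_cast <;> ring

lemma map_toeplitzSum_windowShift {Ω : Type*} [MeasurableSpace Ω] {μ : Measure Ω}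
    {Z : ℤ ⊕ ℕ → Ω → ℝ} (hZ : ∀ k, Measurable (Z k)) (hindep : iIndepFun Z μ)
    (hlaw : ∀ k, μ.map (Z k) = rademacher) (x : ℕ → ℝ) (c : ℕ) :
    μ.map (fun ω => toeplitzSum m r x fun k => Z (windowShift m r c k) ω) =
      (Measure.infinitePi fun _ => rademacher).map (toeplitzSum m r x) := by
  rw [← hindep.map_reindex_eq_infinitePi hZ hlaw (windowShift_injective m r c),
    Measure.map_map (measurable_toeplitzSum m r x) (measurable_pi_lambda _ fun k => hZ _)]
  rfl

end Toeplitz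

theorem shifted_vectors_distribution_general {Ω : Type*} [MeasurableSpace Ω] (μ : Measure Ω)
    [IsProbabilityMeasure μ]
    (m n r : ℕ)
    (t : ℤ → Ω → ℝ) (d : ℕ → Ω → ℝ)
    (ht : ∀ a, Measurable (t a)) (hd : ∀ j, Measurable (d j))
    (hrad_t : ∀ a : ℤ, μ {ω | t a ω = 1} = 1/2 ∧ μ {ω | t a ω = -1} = 1/2)
    (hrad_d : ∀ j : ℕ, μ {ω | d j ω = 1} = 1/2 ∧ μ {ω | d j ω = -1} = 1/2)
    (hindep : ProbabilityTheory.iIndepFun (Sum.elim t d) μ)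
    (x : ℕ → ℝ) (hsupp : ∀ j, r ≤ j → x j = 0)
    (i : ℕ) (hin : i + r ≤ n) :
    Measure.map (fun ω (i' : Fin m) =>
        ∑ j ∈ Finset.range n, t ((j : ℤ) - (i' : ℤ)) ω * d j ω * x j) μ =
      Measure.map (fun ω (i' : Fin m) =>
        ∑ j ∈ Finset.range n, t ((j : ℤ) - (i' : ℤ)) ω * d j ω *
          (if i ≤ j then x (j - i) else 0)) μ ∧
    (m + r ≤ i →
      ProbabilityTheory.IndepFun
        (fun ω (i' : Fin m) =>
          ∑ j ∈ Finset.range n, t ((j : ℤ) - (i' : ℤ)) ω * d j ω * x j)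
        (fun ω (i' : Fin m) =>
          ∑ j ∈ Finset.range n, t ((j : ℤ) - (i' : ℤ)) ω * d j ω *
            (if i ≤ j then x (j - i) else 0)) μ) := by
  have hZ : ∀ k, Measurable (Sum.elim t d k) := fun k => k.rec ht hd
  have hlaw : ∀ k, μ.map (Sum.elim t d k) = rademacher := by
    rintro (a | j)
    · exact map_eq_rademacher (ht a) (hrad_t a).1 (hrad_t a).2
    · exact map_eq_rademacher (hd j) (hrad_d j).1 (hrad_d j).2
  have hTDx := toeplitz_shift_eq_toeplitzSum (m := m) t d hsupp (c := 0) (n := n) (by omega)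
  simp only [zero_le, if_true, Nat.sub_zero] at hTDx
  rw [hTDx, toeplitz_shift_eq_toeplitzSum t d hsupp hin]
  refine ⟨?_, fun hi => ?_⟩
  · rw [map_toeplitzSum_windowShift hZ hindep hlaw, map_toeplitzSum_windowShift hZ hindep hlaw]
  · exact (hindep.indepFun_reindex_of_disjoint hZ (disjoint_range_windowShift (by omega))).comp
      (measurable_toeplitzSum m r x) (measurable_toeplitzSum m r x)

/-- Shift invariance and independence: if `x` is supported on its first `r` coordinates and
`x_{→i}` denotes `x` shifted by `i`, then for `i ≤ n − r` the random vectors `T D x` and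
`T D x_{→i}` are identically distributed, and if additionally `i ≥ m + r` they are
independent. -/
theorem shifted_vectors_distribution {Ω : Type*} [MeasurableSpace Ω] (μ : Measure Ω)
    [IsProbabilityMeasure μ]
    (m n r : ℕ) (hm : 0 < m)
    (t : ℤ → Ω → ℝ) (d : ℕ → Ω → ℝ)
    (ht : ∀ a, Measurable (t a)) (hd : ∀ j, Measurable (d j))
    (hrad_t : ∀ a : ℤ, μ {ω | t a ω = 1} = 1/2 ∧ μ {ω | t a ω = -1} = 1/2)
    (hrad_d : ∀ j : ℕ, μ {ω | d j ω = 1} = 1/2 ∧ μ {ω | d j ω = -1} = 1/2)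
    (hindep : ProbabilityTheory.iIndepFun (Sum.elim t d) μ)
    (x : ℕ → ℝ) (hsupp : ∀ j, r ≤ j → x j = 0)
    (i : ℕ) (hin : i + r ≤ n) :
    Measure.map (fun ω (i' : Fin m) =>
        ∑ j ∈ Finset.range n, t ((j : ℤ) - (i' : ℤ)) ω * d j ω * x j) μ =
      Measure.map (fun ω (i' : Fin m) =>
        ∑ j ∈ Finset.range n, t ((j : ℤ) - (i' : ℤ)) ω * d j ω *
          (if i ≤ j then x (j - i) else 0)) μ ∧
    (m + r ≤ i →
      ProbabilityTheory.IndepFun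
        (fun ω (i' : Fin m) =>
          ∑ j ∈ Finset.range n, t ((j : ℤ) - (i' : ℤ)) ω * d j ω * x j)
        (fun ω (i' : Fin m) =>
          ∑ j ∈ Finset.range n, t ((j : ℤ) - (i' : ℤ)) ω * d j ω *
            (if i ≤ j then x (j - i) else 0)) μ) :=
  shifted_vectors_distribution_general μ m n r t d ht hd hrad_t hrad_d hindep x hsupp i hin
end
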